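/- Let n ≥ 1, let f : ℝ → ℂ be any function, let j ∈ {0,…,n}, and let x₀,…,x_n ∈ ℝ be pairwise distinct. Then f^{[n]}(x₀,…,x_n) = (f·u)^{[n]}(x₀,…,x_n)·(x_j − i)⁻¹ − f^{[n−1]}(x₀,…,x_{j−1},x_{j+1},…,x_n)·(x_j − i)⁻¹, where the second divided difference is taken at the n points obtained by omitting x_j. -/
import Mathlib


/-- The `m`-th order divided difference of `f : ℝ → ℂ` at the `m+1` points `x 0, …, x m`,
given by the explicit symmetric formula (valid for pairwise distinct points). -/
noncomputable def divDiff {m : ℕ} (f : ℝ → ℂ) (x : Fin (m + 1) → ℝ) : ℂ :=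
  ∑ j, f (x j) / ∏ k ∈ Finset.univ.erase j, ((x j : ℂ) - (x k : ℂ))

lemma prod_erase_succAbove' {n : ℕ} (j : Fin (n + 2)) (k : Fin (n + 1)) (g : Fin (n + 2) → ℂ) :
    ∏ m ∈ Finset.univ.erase (j.succAbove k), g m
      = g j * ∏ l ∈ Finset.univ.erase k, g (j.succAbove l) := by
  have hset : Finset.univ.erase (j.succAbove k)
      = insert j ((Finset.univ.erase k).image j.succAbove) := by
    ext m
    constructor
    · intro hm
      have hm' : m ≠ j.succAbove k := (Finset.mem_erase.1 hm).1
      by_cases h : m = j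
      · simp [h]
      · obtain ⟨l, hl⟩ := Fin.exists_succAbove_eq h
        refine Finset.mem_insert.2 (Or.inr (Finset.mem_image.2
          ⟨l, Finset.mem_erase.2 ⟨?_, Finset.mem_univ l⟩, hl⟩))
        rintro rfl; exact hm' hl.symm
    · intro hm
      rcases Finset.mem_insert.1 hm with h | hm
      · refine Finset.mem_erase.2 ⟨?_, Finset.mem_univ _⟩
        rw [h]
        exact (Fin.succAbove_ne j k).symm
      · obtain ⟨l, hl, rfl⟩ := Finset.mem_image.1 hm
        exact Finset.mem_erase.2 ⟨fun h =>
          (Finset.mem_erase.1 hl).1 (Fin.succAbove_right_injective h),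
          Finset.mem_univ _⟩
  have hjnot : j ∉ (Finset.univ.erase k).image j.succAbove := by
    simp only [Finset.mem_image, not_exists]
    intro l
    rintro ⟨-, hl⟩
    exact Fin.succAbove_ne j l hl
  rw [hset, Finset.prod_insert hjnot, Finset.prod_image
    (fun a _ b _ h => Fin.succAbove_right_injective h)]

/-- For `n ≥ 1` (here `n+1` points are `x 0, …, x (n+1)`, i.e. the paper's `n` is `n+1`),
any `f : ℝ → ℂ`, any `j`, and pairwise distinct points:
`f^{[n]}(x₀,…,x_n) = (f·u)^{[n]}(x₀,…,x_n)·(x_j − i)⁻¹ − f^{[n−1]}(x₀,…,x̂_j,…,x_n)·(x_j − i)⁻¹`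
where `u t = t - i` and the hat denotes omission of `x_j`. -/
theorem stmt0 (n : ℕ) (f : ℝ → ℂ) (x : Fin (n + 2) → ℝ)
    (hx : Function.Injective x) (j : Fin (n + 2)) :
    divDiff f x =
      divDiff (fun t : ℝ => f t * ((t : ℂ) - Complex.I)) x * ((x j : ℂ) - Complex.I)⁻¹ -
        divDiff f (x ∘ j.succAbove) * ((x j : ℂ) - Complex.I)⁻¹ := by
  have hI : ((x j : ℂ) - Complex.I) ≠ 0 := by
    intro h
    have := congrArg Complex.im h
    simp at this
  have hne : ∀ a b : Fin (n + 2), a ≠ b → ((x a : ℂ) - (x b : ℂ)) ≠ 0 := by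
    intro a b hab h
    apply hab
    apply hx
    have : (x a : ℂ) = (x b : ℂ) := by linear_combination h
    exact_mod_cast this
  have hD : ∀ a : Fin (n + 2),
      (∏ m ∈ Finset.univ.erase a, ((x a : ℂ) - (x m : ℂ))) ≠ 0 := by
    intro a
    refine Finset.prod_ne_zero_iff.2 fun m hm => hne a m ?_
    exact fun h => (Finset.mem_erase.1 hm).1 h.symm
  rw [← sub_mul, eq_mul_inv_iff_mul_eq₀ hI]
  simp only [divDiff, Function.comp]
  rw [Fin.sum_univ_succAbove
    (fun a => f (x a) / ∏ k ∈ Finset.univ.erase a, ((x a : ℂ) - (x k : ℂ))) j,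
    Fin.sum_univ_succAbove
    (fun a => f (x a) * ((x a : ℂ) - Complex.I) /
      ∏ k ∈ Finset.univ.erase a, ((x a : ℂ) - (x k : ℂ))) j]
  rw [add_mul, Finset.sum_mul]
  have hj : f (x j) / (∏ m ∈ Finset.univ.erase j, ((x j : ℂ) - (x m : ℂ))) *
      ((x j : ℂ) - Complex.I)
      = f (x j) * ((x j : ℂ) - Complex.I) /
        ∏ m ∈ Finset.univ.erase j, ((x j : ℂ) - (x m : ℂ)) := by
    field_simp
  rw [hj, add_sub_assoc]
  congr 1
  rw [← Finset.sum_sub_distrib]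
  refine Finset.sum_congr rfl fun k _ => ?_
  have hprod := prod_erase_succAbove' j k (fun m => ((x (j.succAbove k) : ℂ) - (x m : ℂ)))
  have hP : (∏ l ∈ Finset.univ.erase k,
      ((x (j.succAbove k) : ℂ) - (x (j.succAbove l) : ℂ))) ≠ 0 := by
    refine Finset.prod_ne_zero_iff.2 fun l hl => hne _ _ ?_
    intro h
    exact (Finset.mem_erase.1 hl).1 (Fin.succAbove_right_injective h.symm)
  have he : ((x (j.succAbove k) : ℂ) - (x j : ℂ)) ≠ 0 :=
    hne _ _ (Fin.succAbove_ne j k)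
  rw [hprod]
  field_simp
  ring
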